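/- For z = x + iy in the upper half plane and α > 0, the theta function admits the exponential expansion θ(α; z) = 2√(y/α) Σ_{n=1}^∞ e^{−απyn²} ϑ(y/α; nx) + √(y/α) ϑ(y/α; 0), where ϑ(X;Y) = Σ_{n∈ℤ} e^{−πn²X} e^{2πinY} is the one-dimensional theta function. -/

import Mathlib

open Real

/-- The two-dimensional theta function `θ(α; z) = Σ_{(m,n)∈ℤ²} exp(−(απ/y)|mz+n|²)`. -/
noncomputable def theta (α : ℝ) (z : ℂ) : ℝ :=
  ∑' p : ℤ × ℤ, Real.exp (-(α * π / z.im) * ‖(p.1 : ℂ) * z + (p.2 : ℂ)‖ ^ 2)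

/-- The one-dimensional theta function `ϑ(X;Y) = Σ_{n∈ℤ} e^{−πn²X} e^{2πinY}` (real-valued). -/
noncomputable def theta1 (X Y : ℝ) : ℝ :=
  ∑' n : ℤ, Real.exp (-π * (n : ℝ) ^ 2 * X) * Real.cos (2 * π * (n : ℝ) * Y)

/-!
Since `|mz + n|² = (mx + n)² + m²y²`, the `(m, n)` summand of `θ(α; z)` factors as
`e^{-απym²} · e^{-π(n + mx)²/X}` with `X = y/α`. Poisson summation in `n` turns the `m`-th row into
`√X ϑ(X; mx)`, and since `0 ≤ ϑ(X; Y) ≤ ϑ(X; 0)` the nonnegative double series converges, so it may be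
summed row by row. The resulting series over `m` is even in `m`, and folding `m` and `-m` together
gives the expansion.
-/

open Complex (I)
open scoped Complex

lemma tsum_int_eq_zero_add_two_nsmul_tsum_nat_succ {G : Type*} [AddCommGroup G]
    [UniformSpace G] [IsUniformAddGroup G] [CompleteSpace G] [T2Space G] {f : ℤ → G}
    (hf : f.Even) (hsum : Summable f) :
    ∑' n, f n = f 0 + 2 • ∑' n : ℕ, f (n + 1) := by
  rw [tsum_int_eq_zero_add_two_mul_tsum_pnat hf hsum,
    tsum_pnat_eq_tsum_succ (f := fun n : ℕ => f n)]
  push_cast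
  rfl

lemma summable_exp_neg_pi_mul_add_sq_div {X : ℝ} (hX : 0 < X) (c : ℝ) :
    Summable fun n : ℤ => rexp (-π * ((n : ℝ) + c) ^ 2 / X) := by
  refine (HurwitzKernelBounds.summable_f_int 0 c (inv_pos.mpr hX)).congr fun n => ?_
  simp [HurwitzKernelBounds.f_int, div_eq_mul_inv]

lemma hasSum_theta1 {X : ℝ} (hX : 0 < X) (Y : ℝ) :
    HasSum (fun n : ℤ => rexp (-π * (n : ℝ) ^ 2 * X) * Real.cos (2 * π * (n : ℝ) * Y))
      (∑' n : ℤ, cexp (-π * X * n ^ 2 + 2 * π * (I * Y) * n)).re := by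
  have hsum : Summable fun n : ℤ => cexp (-π * X * n ^ 2 + 2 * π * (I * Y) * n) := by
    refine .of_norm ((summable_exp_neg_pi_mul_add_sq_div (inv_pos.mpr hX) 0).congr fun n => ?_)
    simp [Complex.norm_exp, sq, mul_comm, mul_left_comm, mul_assoc]
  convert Complex.hasSum_re hsum.hasSum using 2 with n
  simp [Complex.exp_re, sq, mul_comm, mul_left_comm, mul_assoc]

lemma theta1_neg (X Y : ℝ) : theta1 X (-Y) = theta1 X Y := by
  simp only [theta1, mul_neg, Real.cos_neg]

lemma tsum_exp_neg_pi_mul_add_sq_div {X : ℝ} (hX : 0 < X) (c : ℝ) :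
    ∑' n : ℤ, rexp (-π * ((n : ℝ) + c) ^ 2 / X) = √X * theta1 X c := by
  have hroot : (1 : ℂ) / (X : ℂ) ^ (1 / 2 : ℂ) = ((√X)⁻¹ : ℝ) := by
    rw [Real.sqrt_eq_rpow, Complex.ofReal_inv, Complex.ofReal_cpow hX.le]
    norm_num
  have hgauss : ∑' n : ℤ, cexp (-π / X * (n + I * (I * (-c : ℝ))) ^ 2)
      = ((∑' n : ℤ, rexp (-π * ((n : ℝ) + c) ^ 2 / X) : ℝ) : ℂ) := by
    rw [Complex.ofReal_tsum]
    refine tsum_congr fun n => ?_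
    rw [Complex.ofReal_exp]
    congr 1
    push_cast
    ring_nf
    simp [Complex.I_sq]
  -- `ϑ(X; -c)` is the left side of `Complex.tsum_exp_neg_quadratic` for `a = X`, `b = I (-c)`.
  rw [← theta1_neg, theta1, (hasSum_theta1 hX (-c)).tsum_eq,
    Complex.tsum_exp_neg_quadratic (by simpa using hX), hroot, hgauss, ← Complex.ofReal_mul,
    Complex.ofReal_re]
  field_simp

lemma theta1_nonneg {X : ℝ} (hX : 0 < X) (Y : ℝ) : 0 ≤ theta1 X Y := by
  have h := tsum_exp_neg_pi_mul_add_sq_div hX Y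
  have : 0 ≤ √X * theta1 X Y := h ▸ tsum_nonneg fun _ => Real.exp_nonneg _
  exact nonneg_of_mul_nonneg_right this (Real.sqrt_pos.mpr hX)

lemma theta1_le_theta1_zero {X : ℝ} (hX : 0 < X) (Y : ℝ) : theta1 X Y ≤ theta1 X 0 :=
  Summable.tsum_le_tsum
    (fun n => by simpa using mul_le_mul_of_nonneg_left (Real.cos_le_one _) (Real.exp_nonneg _))
    (hasSum_theta1 hX Y).summable (hasSum_theta1 hX 0).summable

lemma summable_exp_neg_mul_sq_mul_theta1 {a X : ℝ} (ha : 0 < a) (hX : 0 < X) (f : ℤ → ℝ) :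
    Summable fun m : ℤ => rexp (-a * (m : ℝ) ^ 2) * theta1 X (f m) := by
  have hgauss : Summable fun m : ℤ => rexp (-a * (m : ℝ) ^ 2) :=
    (summable_exp_neg_pi_mul_add_sq_div (div_pos pi_pos ha) 0).congr fun m => by
      field_simp
      simp
  exact .of_nonneg_of_le (fun m => mul_nonneg (Real.exp_nonneg _) (theta1_nonneg hX _))
    (fun m => mul_le_mul_of_nonneg_left (theta1_le_theta1_zero hX _) (Real.exp_nonneg _))
    (hgauss.mul_right _)

lemma theta_summand_eq_exp_mul_exp (α x y : ℝ) (m n : ℤ) :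
    rexp (-(α * π / (⟨x, y⟩ : ℂ).im) * ‖(m : ℂ) * ⟨x, y⟩ + n‖ ^ 2)
      = rexp (-α * π * y * (m : ℝ) ^ 2) * rexp (-π * ((n : ℝ) + m * x) ^ 2 / (y / α)) := by
  rw [← Real.exp_add, Complex.sq_norm, Complex.normSq_apply]
  congr 1
  simp only [Complex.add_re, Complex.mul_re, Complex.intCast_re, Complex.intCast_im, zero_mul,
    sub_zero, Complex.add_im, Complex.mul_im, add_zero, neg_mul]
  field_simp
  ring

lemma hasSum_theta {α y : ℝ} (hα : 0 < α) (hy : 0 < y) (x : ℝ) :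
    HasSum (fun m : ℤ => rexp (-α * π * y * (m : ℝ) ^ 2) * (√(y / α) * theta1 (y / α) (m * x)))
      (theta α ⟨x, y⟩) := by
  have hX : 0 < y / α := div_pos hy hα
  set F : ℤ × ℤ → ℝ := fun p =>
    rexp (-α * π * y * (p.1 : ℝ) ^ 2) * rexp (-π * ((p.2 : ℝ) + p.1 * x) ^ 2 / (y / α))
  have hrow (m : ℤ) : HasSum (fun n => F (m, n))
      (rexp (-α * π * y * (m : ℝ) ^ 2) * (√(y / α) * theta1 (y / α) (m * x))) := by
    have h := ((summable_exp_neg_pi_mul_add_sq_div hX (m * x)).mul_left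
      (rexp (-α * π * y * (m : ℝ) ^ 2))).hasSum
    rwa [tsum_mul_left, tsum_exp_neg_pi_mul_add_sq_div hX] at h
  have hsum : Summable F := by
    refine (summable_prod_of_nonneg fun p => by positivity).mpr ⟨fun m => (hrow m).summable, ?_⟩
    refine ((summable_exp_neg_mul_sq_mul_theta1 (a := α * π * y) (by positivity) hX
      (fun m => m * x)).mul_left √(y / α)).congr fun m => ?_
    simp only [(hrow m).tsum_eq, neg_mul]
    ring
  have htheta : theta α ⟨x, y⟩ = ∑' p, F p :=
    tsum_congr fun p => theta_summand_eq_exp_mul_exp α x y p.1 p.2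
  exact htheta ▸ hsum.hasSum.prod_fiberwise hrow

theorem theta_exponential_expansion (α x y : ℝ) (hα : 0 < α) (hy : 0 < y) :
    theta α (⟨x, y⟩ : ℂ) =
      2 * Real.sqrt (y / α) *
          (∑' n : ℕ, Real.exp (-α * π * y * ((n : ℝ) + 1) ^ 2) * theta1 (y / α) (((n : ℝ) + 1) * x))
        + Real.sqrt (y / α) * theta1 (y / α) 0 := by
  have hθ := hasSum_theta hα hy x
  rw [← hθ.tsum_eq, tsum_int_eq_zero_add_two_nsmul_tsum_nat_succ ?even hθ.summable]
  case even =>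
    intro m
    simp [theta1_neg]
  simp only [mul_left_comm _ √(y / α), tsum_mul_left]
  simp only [neg_mul, Int.cast_zero, ne_eq, OfNat.ofNat_ne_zero, not_false_eq_true, zero_pow,
    mul_zero, exp_zero, zero_mul, one_mul, Int.cast_add, Int.cast_natCast, Int.cast_one,
    nsmul_eq_mul, Nat.cast_ofNat]
  ring
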